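/- Let (M, ⊥) be a separoid, X_1, …, X_n ∈ M, and let G = (V, E) be the path graph with V = [n] and E = {{i, i+1} : i = 1, …, n−1}. Then the following are equivalent: (1) X_1, …, X_n form a Markov chain with respect to ⊥; (2) for all i = 1, …, n−1 one has X_{[i+1:n]} ⊥ X_{[i−1]} | X_i (where [i+1:n] = {i+1,…,n} and [i−1] = {1,…,i−1}); (3) X_1, …, X_n form a Markov random field with respect to ⊥ and G. -/

import Mathlib

/-
Separation in a graph can be saturated: enlarge `A` to everything reachable from it by walks
avoiding `C`, and let `B` be the rest. Then `A, B, C` partition the vertices and no edge joins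
`A` to `B`, and by decomposition it suffices to prove `X_A ⊥ X_B | X_C` for such partitions.
For the path this goes by induction on its length, removing the top vertex `t`. If `t ∈ A`, its
lower neighbour `t - 1` is not in `B`, so weak union turns the chain step
`X_t ⊥ X_{[0, t-1)} | X_{t-1}` into `X_t ⊥ X_B | X_{A ∖ t} X_C`, and contraction with the
induction hypothesis gives the claim. The other two conditions are instances of the global
Markov property and of decomposition.
-/

namespace AMRF
/-- The separoid axioms (S1)–(S5) for a ternary relation `ind X Y Z` (read `X ⊥ Y | Z`)
on a commutative idempotent monoid. -/
def IsSeparoid {M : Type*} [CommMonoid M] (ind : M → M → M → Prop) : Prop :=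
  (∀ X Y Z : M, ind X Y Z → ind Y X Z) ∧
  (∀ W Y Z : M, W * Z = Z → ind W Y Z) ∧
  (∀ W X Y Z : M, ind (W * X) Y Z → ind X Y Z) ∧
  (∀ W X Y Z : M, ind (W * X) Y Z → ind W Y (X * Z)) ∧
  (∀ W X Y Z : M, ind W Y (X * Z) → ind X Y Z → ind (W * X) Y Z)
/-- The graph `G − U`: keep only edges with both endpoints outside `U`. -/
def delGraph {V : Type*} (G : SimpleGraph V) (U : Finset V) : SimpleGraph V where
  Adj a b := G.Adj a b ∧ a ∉ U ∧ b ∉ U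
  symm := ⟨fun _ _ h => ⟨h.1.symm, h.2.2, h.2.1⟩⟩
  loopless := ⟨fun _ h => G.irrefl h.1⟩

/-- `C` separates `A` from `B` in `G`: every walk from a vertex of `A` to a vertex of `B`
passes through some vertex of `C`. -/
def Separates {V : Type*} (G : SimpleGraph V) (A B C : Finset V) : Prop :=
  ∀ a ∈ A, ∀ b ∈ B, ∀ w : G.Walk a b, ∃ c ∈ C, c ∈ w.support

/-- `U` is a cutset: `G − U` has more than one connected component. -/
def IsCutset {V : Type*} (G : SimpleGraph V) (U : Finset V) : Prop :=
  ∃ v w : V, v ∉ U ∧ w ∉ U ∧ ¬ (delGraph G U).Reachable v w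

/-- `C` is (the vertex set of) a connected component of `G − U`. -/
def IsCompOf {V : Type*} (G : SimpleGraph V) (U C : Finset V) : Prop :=
  ∃ v, v ∉ U ∧ ∀ w, w ∈ C ↔ (delGraph G U).Reachable v w

/-- The global Markov property: `X₁, …, X_n` form a Markov random field with respect to the
independence relation `ind` and the graph `Gr`. -/
def IsMRF {M : Type*} [CommMonoid M] {n : ℕ} (ind : M → M → M → Prop)
    (Gr : SimpleGraph (Fin n)) (X : Fin n → M) : Prop :=
  ∀ A B C : Finset (Fin n), Disjoint A B → Disjoint A C → Disjoint B C →
    Separates Gr A B C →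
    ind (∏ a ∈ A, X a) (∏ b ∈ B, X b) (∏ c ∈ C, X c)

/-- `X₁, …, X_n` form a Markov chain with respect to `ind`:
`Xᵢ ⊥ X_{[i−2]} | X_{i−1}` for all `2 ≤ i ≤ n` (here with `0`-based indices:
for consecutive indices `j + 1 = i`, `Xᵢ` is independent of the product of all `X_k`
with `k < j`, given `X_j`). -/
def MarkovChainSep {M : Type*} [CommMonoid M] {n : ℕ} (ind : M → M → M → Prop)
    (X : Fin n → M) : Prop :=
  ∀ i j : Fin n, (j : ℕ) + 1 = (i : ℕ) →
    ind (X i) (∏ k ∈ Finset.univ.filter (fun k => k < j), X k) (X j)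

open Finset

namespace IsSeparoid

variable {M : Type*} [CommMonoid M] {ind : M → M → M → Prop}

theorem symm (h : IsSeparoid ind) {X Y Z : M} (hXY : ind X Y Z) : ind Y X Z :=
  h.1 X Y Z hXY

theorem one_left (h : IsSeparoid ind) (Y Z : M) : ind 1 Y Z :=
  h.2.1 1 Y Z (one_mul Z)

theorem one_right (h : IsSeparoid ind) (X Z : M) : ind X 1 Z :=
  h.symm (h.one_left X Z)

theorem decomposition (h : IsSeparoid ind) {W X Y Z : M} (hWX : ind (W * X) Y Z) : ind X Y Z :=
  h.2.2.1 W X Y Z hWX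

theorem weak_union (h : IsSeparoid ind) {W X Y Z : M} (hWX : ind (W * X) Y Z) :
    ind W Y (X * Z) :=
  h.2.2.2.1 W X Y Z hWX

theorem contraction (h : IsSeparoid ind) {W X Y Z : M} (hW : ind W Y (X * Z)) (hX : ind X Y Z) :
    ind (W * X) Y Z :=
  h.2.2.2.2 W X Y Z hW hX

theorem prod_mono_left (h : IsSeparoid ind) {ι : Type*} [DecidableEq ι] {A A' : Finset ι}
    (hAA' : A ⊆ A') (X : ι → M) {Y Z : M} (hA' : ind (∏ a ∈ A', X a) Y Z) :
    ind (∏ a ∈ A, X a) Y Z :=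
  h.decomposition (by rwa [prod_sdiff hAA'])

theorem prod_mono_right (h : IsSeparoid ind) {ι : Type*} [DecidableEq ι] {B B' : Finset ι}
    (hBB' : B ⊆ B') (X : ι → M) {Y Z : M} (hB' : ind Y (∏ b ∈ B', X b) Z) :
    ind Y (∏ b ∈ B, X b) Z :=
  h.symm (h.prod_mono_left hBB' X (h.symm hB'))

theorem of_prod_insert_erase (h : IsSeparoid ind) {ι : Type*} [DecidableEq ι]
    {A C : Finset ι} {t : ι} (htA : t ∉ A) (htC : t ∈ C) (X : ι → M) {Y : M}
    (hind : ind (∏ a ∈ insert t A, X a) Y (∏ c ∈ C.erase t, X c)) :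
    ind (∏ a ∈ A, X a) Y (∏ c ∈ C, X c) := by
  rw [prod_insert htA, mul_comm] at hind
  rw [← mul_prod_erase C X htC]
  exact h.weak_union hind

end IsSeparoid

def MarkovChainSepNat {M : Type*} [CommMonoid M] (ind : M → M → M → Prop) (Y : ℕ → M) :
    Prop :=
  ∀ j, ind (Y (j + 1)) (∏ k ∈ range j, Y k) (Y j)

structure IsPathCut (t : ℕ) (A B C : Finset ℕ) : Prop where
  cover : A ∪ B ∪ C = range t
  disjoint_left_right : Disjoint A B
  disjoint_left_sep : Disjoint A C
  disjoint_right_sep : Disjoint B C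
  not_adj : ∀ a ∈ A, ∀ b ∈ B, a + 1 ≠ b ∧ b + 1 ≠ a

namespace IsPathCut

variable {t : ℕ} {A B C : Finset ℕ}

theorem mem_iff (h : IsPathCut t A B C) (k : ℕ) : k ∈ A ∨ k ∈ B ∨ k ∈ C ↔ k < t := by
  rw [← mem_range, ← h.cover]; simp only [mem_union, or_assoc]

theorem swap (h : IsPathCut t A B C) : IsPathCut t B A C where
  cover := by rw [← h.cover, union_comm A B]
  disjoint_left_right := h.disjoint_left_right.symm
  disjoint_left_sep := h.disjoint_right_sep
  disjoint_right_sep := h.disjoint_left_sep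
  not_adj b hb a ha := (h.not_adj a ha b hb).symm

theorem erase_top (h : IsPathCut (t + 1) A B C) (ht : t ∈ A) :
    IsPathCut t (A.erase t) B C where
  cover := by
    have hB : t ∉ B := disjoint_left.mp h.disjoint_left_right ht
    have hC : t ∉ C := disjoint_left.mp h.disjoint_left_sep ht
    ext k
    have := h.mem_iff k
    simp only [mem_union, mem_erase, mem_range] at this ⊢
    grind
  disjoint_left_right := h.disjoint_left_right.mono_left (erase_subset _ _)
  disjoint_left_sep := h.disjoint_left_sep.mono_left (erase_subset _ _)
  disjoint_right_sep := h.disjoint_right_sep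
  not_adj a ha := h.not_adj a (mem_of_mem_erase ha)

theorem move_top (h : IsPathCut (t + 1) A B C) (ht : t ∈ C) (hB : ∀ b ∈ B, b + 1 ≠ t) :
    IsPathCut (t + 1) (insert t A) B (C.erase t) where
  cover := by
    ext k
    have := h.mem_iff k
    simp only [mem_union, mem_insert, mem_erase, mem_range] at this ⊢
    grind
  disjoint_left_right := disjoint_insert_left.mpr
    ⟨fun htB => disjoint_left.mp h.disjoint_right_sep htB ht, h.disjoint_left_right⟩
  disjoint_left_sep := disjoint_insert_left.mpr
    ⟨notMem_erase t C, h.disjoint_left_sep.mono_right (erase_subset _ _)⟩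
  disjoint_right_sep := h.disjoint_right_sep.mono_right (erase_subset _ _)
  not_adj a ha b hb := by
    rcases mem_insert.mp ha with rfl | ha
    · have := (h.mem_iff b).mp (Or.inr (Or.inl hb))
      exact ⟨by omega, hB b hb⟩
    · exact h.not_adj a ha b hb

theorem erase_top_union (h : IsPathCut (t + 1) A B C) (ht : t ∈ A) :
    A.erase t ∪ C = range t \ B := by
  ext k
  have := h.mem_iff k
  have hAB : k ∈ A → k ∉ B := fun hA => disjoint_left.mp h.disjoint_left_right hA
  have hAC : k ∈ A → k ∉ C := fun hA => disjoint_left.mp h.disjoint_left_sep hA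
  have hBC : k ∈ B → k ∉ C := fun hB => disjoint_left.mp h.disjoint_right_sep hB
  simp only [mem_union, mem_erase, mem_range, mem_sdiff] at this ⊢
  grind

end IsPathCut

namespace IsSeparoid

variable {M : Type*} [CommMonoid M] {ind : M → M → M → Prop}

theorem ind_of_isPathCut_of_top_mem (h : IsSeparoid ind) {Y : ℕ → M}
    (hY : MarkovChainSepNat ind Y) {t : ℕ} {A B C : Finset ℕ} (hcut : IsPathCut (t + 1) A B C)
    (ht : t ∈ A) (ih : ind (∏ a ∈ A.erase t, Y a) (∏ b ∈ B, Y b) (∏ c ∈ C, Y c)) :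
    ind (∏ a ∈ A, Y a) (∏ b ∈ B, Y b) (∏ c ∈ C, Y c) := by
  rcases B.eq_empty_or_nonempty with rfl | ⟨b, hb⟩
  · simpa using h.one_right _ _
  obtain ⟨u, rfl⟩ : ∃ u, t = u + 1 := by
    have := (hcut.mem_iff b).mp (Or.inr (Or.inl hb))
    have := hcut.not_adj t ht b hb
    have : b ≠ t := fun hbt => disjoint_left.mp hcut.disjoint_left_right ht (hbt ▸ hb)
    exact ⟨t - 1, by omega⟩
  have huB : u ∉ B := fun hu => (hcut.not_adj _ ht u hu).2 rfl
  have hBu : B ⊆ range u := fun b hb => by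
    have := (hcut.mem_iff b).mp (Or.inr (Or.inl hb))
    have := (hcut.not_adj _ ht b hb).2
    have : b ≠ u + 1 := fun hbt => disjoint_left.mp hcut.disjoint_left_right ht (hbt ▸ hb)
    have : b ≠ u := fun hbu => huB (hbu ▸ hb)
    exact mem_range.mpr (by omega)
  have hstep : ind (∏ b ∈ B, Y b) (Y (u + 1)) (∏ k ∈ A.erase (u + 1) ∪ C, Y k) := by
    have hu := h.symm (hY u)
    rw [← prod_sdiff hBu, mul_comm] at hu
    rw [hcut.erase_top_union ht, range_add_one, insert_sdiff_of_notMem _ huB,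
      prod_insert (by simp), mul_comm]
    exact h.weak_union hu
  rw [prod_union (hcut.disjoint_left_sep.mono_left (erase_subset _ _))] at hstep
  rw [← mul_prod_erase A Y ht]
  exact h.contraction (h.symm hstep) ih

theorem ind_of_isPathCut (h : IsSeparoid ind) {Y : ℕ → M} (hY : MarkovChainSepNat ind Y)
    {t : ℕ} {A B C : Finset ℕ} (hcut : IsPathCut t A B C) :
    ind (∏ a ∈ A, Y a) (∏ b ∈ B, Y b) (∏ c ∈ C, Y c) := by
  induction t generalizing A B C with
  | zero =>
    have hA : A = ∅ := eq_empty_of_forall_notMem fun k hk =>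
      Nat.not_lt_zero k ((hcut.mem_iff k).mp (Or.inl hk))
    simpa [hA] using h.one_left _ _
  | succ t ih =>
    have top_mem_left {A B C : Finset ℕ} (hcut : IsPathCut (t + 1) A B C) (ht : t ∈ A) :
        ind (∏ a ∈ A, Y a) (∏ b ∈ B, Y b) (∏ c ∈ C, Y c) :=
      h.ind_of_isPathCut_of_top_mem hY hcut ht (ih (hcut.erase_top ht))
    rcases (hcut.mem_iff t).mpr (Nat.lt_add_one t) with htA | htB | htC
    · exact top_mem_left hcut htA
    · exact h.symm (top_mem_left hcut.swap htB)
    -- Moving `t` from `C` to a side that contains no neighbour of `t` keeps the cut valid,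
    -- and weak union moves it back into the conditioning set.
    · by_cases hB : ∀ b ∈ B, b + 1 ≠ t
      · exact h.of_prod_insert_erase (disjoint_right.mp hcut.disjoint_left_sep htC) htC Y
          (top_mem_left (hcut.move_top htC hB) (mem_insert_self t A))
      · have hA : ∀ a ∈ A, a + 1 ≠ t := by
          push Not at hB
          obtain ⟨b, hb, hbt⟩ := hB
          intro a ha hat
          obtain rfl : a = b := by omega
          exact disjoint_left.mp hcut.disjoint_left_right ha hb
        exact h.symm (h.of_prod_insert_erase (disjoint_right.mp hcut.disjoint_right_sep htC) htC Y
          (top_mem_left (hcut.swap.move_top htC hA) (mem_insert_self t B)))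

end IsSeparoid

section Graph

variable {V : Type*} {G : SimpleGraph V}

theorem Separates.exists_saturation [Fintype V] {A B C : Finset V}
    (hS : Separates G A B C) (hAC : Disjoint A C) :
    ∃ A' : Finset V, A ⊆ A' ∧ Disjoint A' B ∧ Disjoint A' C ∧
      ∀ a ∈ A', ∀ v ∉ C, G.Adj a v → v ∈ A' := by
  classical
  refine ⟨univ.filter fun v => ∃ a ∈ A, ∃ w : G.Walk a v, ∀ x ∈ w.support, x ∉ C,
    fun a ha => ?_, disjoint_left.mpr ?_, disjoint_left.mpr ?_, ?_⟩
  · simp only [mem_filter, mem_univ, true_and]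
    refine ⟨a, ha, .nil, fun x hx => ?_⟩
    rw [SimpleGraph.Walk.support_nil, List.mem_singleton] at hx
    exact hx ▸ disjoint_left.mp hAC ha
  · simp only [mem_filter, mem_univ, true_and]
    rintro b ⟨a, ha, w, hw⟩ hb
    obtain ⟨c, hc, hcw⟩ := hS a ha b hb w
    exact hw c hcw hc
  · simp only [mem_filter, mem_univ, true_and]
    rintro v ⟨a, -, w, hw⟩
    exact hw v w.end_mem_support
  · simp only [mem_filter, mem_univ, true_and]
    rintro v ⟨a, ha, w, hw⟩ u hu hvu
    refine ⟨a, ha, w.concat hvu, fun x hx => ?_⟩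
    rw [SimpleGraph.Walk.support_concat, List.mem_append, List.mem_singleton] at hx
    rcases hx with hx | rfl
    exacts [hw x hx, hu]

end Graph

section Path

variable {n : ℕ} {Gr : SimpleGraph (Fin n)}

theorem mem_support_of_lt_of_lt
    (hGr : ∀ i j, Gr.Adj i j → (i : ℕ) + 1 = j ∨ (j : ℕ) + 1 = i) {a b c : Fin n}
    (w : Gr.Walk a b) (hbc : b < c) (hca : c < a) : c ∈ w.support := by
  induction w with
  | nil => exact absurd (hbc.trans hca) (lt_irrefl _)
  | @cons u v b huv w ih =>
    rw [SimpleGraph.Walk.support_cons, List.mem_cons]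
    rcases eq_or_ne v c with rfl | hvc
    · exact Or.inr w.start_mem_support
    · have := hGr u v huv
      rw [Fin.lt_def] at hbc hca
      rw [← Fin.val_ne_iff] at hvc
      exact Or.inr (ih hbc (Fin.lt_def.mpr (by omega)))

theorem Separates.exists_isPathCut (hGr : ∀ i j : Fin n, (i : ℕ) + 1 = j → Gr.Adj i j)
    {A B C : Finset (Fin n)} (hS : Separates Gr A B C) (hAC : Disjoint A C)
    (hBC : Disjoint B C) :
    ∃ A' B' : Finset (Fin n), A ⊆ A' ∧ B ⊆ B' ∧
      IsPathCut n (A'.map Fin.valEmbedding) (B'.map Fin.valEmbedding)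
        (C.map Fin.valEmbedding) := by
  obtain ⟨A', hAA', hA'B, hA'C, hclosed⟩ := hS.exists_saturation hAC
  have hB' : ∀ v, v ∈ univ \ (A' ∪ C) ↔ v ∉ A' ∧ v ∉ C := by simp
  refine ⟨A', univ \ (A' ∪ C), hAA', fun b hb => (hB' b).mpr
    ⟨disjoint_right.mp hA'B hb, disjoint_left.mp hBC hb⟩, ?_⟩
  refine ⟨?_, (disjoint_map _).mpr ?_, (disjoint_map _).mpr hA'C, (disjoint_map _).mpr ?_, ?_⟩
  · rw [← map_union, ← map_union, ← Nat.Iio_eq_range, ← Fin.map_valEmbedding_univ]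
    congr 1
    ext v
    simp only [mem_union, hB', mem_univ, iff_true]
    tauto
  · exact disjoint_left.mpr fun v hv hv' => ((hB' v).mp hv').1 hv
  · exact disjoint_left.mpr fun v hv hv' => ((hB' v).mp hv).2 hv'
  · simp only [mem_map, Fin.valEmbedding_apply]
    rintro _ ⟨a, ha, rfl⟩ _ ⟨b, hb, rfl⟩
    obtain ⟨hbA', hbC⟩ := (hB' b).mp hb
    exact ⟨fun hab => hbA' (hclosed a ha b hbC (hGr a b hab)),
      fun hba => hbA' (hclosed a ha b hbC (hGr b a hba).symm)⟩

end Path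

section Extend

variable {M : Type*} [CommMonoid M] {ind : M → M → M → Prop} {n : ℕ}

theorem prod_map_valEmbedding_extend (X : Fin n → M) (A : Finset (Fin n)) :
    ∏ k ∈ A.map Fin.valEmbedding, Function.extend Fin.val X 1 k = ∏ a ∈ A, X a := by
  rw [prod_map]
  exact prod_congr rfl fun a _ => Fin.val_injective.extend_apply X 1 a

theorem MarkovChainSep.extend (hsep : IsSeparoid ind) {X : Fin n → M}
    (hmc : MarkovChainSep ind X) : MarkovChainSepNat ind (Function.extend Fin.val X 1) := by
  intro j
  by_cases hj : j + 1 < n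
  · have hrange :
        range j = (univ.filter (· < (⟨j, by omega⟩ : Fin n))).map Fin.valEmbedding := by
      rw [filter_gt_eq_Iio, Fin.map_valEmbedding_Iio, Nat.Iio_eq_range]
    rw [hrange, prod_map_valEmbedding_extend, Fin.val_injective.extend_apply X 1 ⟨j + 1, hj⟩,
      Fin.val_injective.extend_apply X 1 ⟨j, by omega⟩]
    exact hmc ⟨j + 1, hj⟩ ⟨j, by omega⟩ rfl
  · rw [Function.extend_apply' _ _ _ fun ⟨a, ha⟩ => hj (ha ▸ a.isLt)]
    exact hsep.one_left _ _

end Extend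

theorem markov_chain_characterization_general
    {M : Type*} [CommMonoid M]
    (ind : M → M → M → Prop) (hsep : IsSeparoid ind)
    (n : ℕ) (X : Fin n → M)
    (Gr : SimpleGraph (Fin n))
    (hGr : ∀ i j : Fin n, Gr.Adj i j ↔ ((i : ℕ) + 1 = (j : ℕ) ∨ (j : ℕ) + 1 = (i : ℕ))) :
    List.TFAE
      [ MarkovChainSep ind X,
        ∀ i : Fin n, (i : ℕ) + 2 ≤ n →
          ind (∏ k ∈ Finset.univ.filter (fun k => i < k), X k)
            (∏ k ∈ Finset.univ.filter (fun k => k < i), X k) (X i),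
        IsMRF ind Gr X ] := by
  tfae_have 1 → 3 := fun hmc A B C _ hAC hBC hS => by
    obtain ⟨A', B', hAA', hBB', hcut⟩ :=
      hS.exists_isPathCut (fun i j hij => (hGr i j).mpr (Or.inl hij)) hAC hBC
    have h := hsep.ind_of_isPathCut (hmc.extend hsep) hcut
    simp only [prod_map_valEmbedding_extend] at h
    exact hsep.prod_mono_right hBB' X (hsep.prod_mono_left hAA' X h)
  tfae_have 3 → 2 := fun hmrf i _ => by
    have h := hmrf (univ.filter (i < ·)) (univ.filter (· < i)) {i}
      (disjoint_filter.mpr fun k _ hik hki => lt_asymm hik hki)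
      (disjoint_singleton_right.mpr (by simp)) (disjoint_singleton_right.mpr (by simp))
      fun a ha b hb w => ⟨i, mem_singleton_self i,
        mem_support_of_lt_of_lt (fun i j => (hGr i j).mp) w (by simpa using hb)
          (by simpa using ha)⟩
    rwa [prod_singleton] at h
  tfae_have 2 → 1 := fun h2 i j hij => by
    have h := h2 j (by omega)
    have hsplit : univ.filter (j < ·) = insert i (univ.filter (i < ·)) := by
      ext k
      simp only [mem_filter, mem_univ, true_and, mem_insert, Fin.lt_def, Fin.ext_iff]
      omega
    rw [hsplit, prod_insert (by simp), mul_comm] at h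
    exact hsep.decomposition h
  tfae_finish

/-- For `X₁, …, X_n` in a separoid and the path graph `Gr` on `[n]`,
the following are equivalent: (1) `X₁ → ⋯ → X_n` is a Markov chain;
(2) `X_{[i+1:n]} ⊥ X_{[i−1]} | Xᵢ` for all `i = 1, …, n−1`;
(3) `X₁, …, X_n` form a Markov random field with respect to `⊥` and `Gr`. -/
theorem markov_chain_characterization
    {M : Type*} [CommMonoid M] (hidem : ∀ x : M, x * x = x)
    (ind : M → M → M → Prop) (hsep : IsSeparoid ind)
    (n : ℕ) (X : Fin n → M)
    (Gr : SimpleGraph (Fin n))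
    (hGr : ∀ i j : Fin n, Gr.Adj i j ↔ ((i : ℕ) + 1 = (j : ℕ) ∨ (j : ℕ) + 1 = (i : ℕ))) :
    List.TFAE
      [ MarkovChainSep ind X,
        ∀ i : Fin n, (i : ℕ) + 2 ≤ n →
          ind (∏ k ∈ Finset.univ.filter (fun k => i < k), X k)
            (∏ k ∈ Finset.univ.filter (fun k => k < i), X k) (X i),
        IsMRF ind Gr X ] :=
  markov_chain_characterization_general ind hsep n X Gr hGr

end AMRF
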